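/- arXiv:1111.0670 — 6 statements merged into one kernel-verified Lean document; each statement's English description precedes it below -/
import Mathlib

section
/- If cost functions f₁ and f₂ are both regular with respect to a cost model, and L ⊆ Σ* is a regular language, then the choice function mapping w to f₁(w) if w ∈ L and to f₂(w) otherwise is also regular with respect to that cost model. -/
/-- Terms over a ranked alphabet `F` (with arities `ar`), possibly containing the
parameter `?` (a hole) at leaves. -/
inductive PTerm (F : Type*) (ar : F → ℕ) : Type _
  | node (f : F) (ch : Fin (ar f) → PTerm F ar) : PTerm F ar
  | hole : PTerm F ar

namespace PTerm

variable {F : Type*} {ar : F → ℕ}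

/-- Substitute the term `s` for every hole of `t`. -/
def plug : PTerm F ar → PTerm F ar → PTerm F ar
  | .node f ch, s => .node f (fun i => (ch i).plug s)
  | .hole, s => s

/-- A term is closed (complete) if it contains no hole. -/
def Closed : PTerm F ar → Prop
  | .node _ ch => ∀ i, (ch i).Closed
  | .hole => False

/-- Evaluate a term in a cost domain `D`, given an interpretation of the function
symbols; holes get the (irrelevant for closed terms) value `h`. -/
def evalD {D : Type*} (interp : ∀ f : F, (Fin (ar f) → D) → D) (h : D) :
    PTerm F ar → D
  | .node f ch => interp f (fun i => (ch i).evalD interp h)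
  | .hole => h

end PTerm

/-- Update expressions of a streaming string-to-tree transducer: terms built from
the ranked alphabet, registers, the parameter `?`, and substitution. -/
inductive TExpr (F : Type*) (ar : F → ℕ) (X : Type*) : Type _
  | node (f : F) (ch : Fin (ar f) → TExpr F ar X) : TExpr F ar X
  | reg (x : X) : TExpr F ar X
  | hole : TExpr F ar X
  | subst (e₁ e₂ : TExpr F ar X) : TExpr F ar X

namespace TExpr

variable {F : Type*} {ar : F → ℕ} {X : Type*}

/-- Evaluate an update expression under a register valuation. -/
def eval (ν : X → PTerm F ar) : TExpr F ar X → PTerm F ar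
  | .node f ch => .node f (fun i => (ch i).eval ν)
  | .reg x => ν x
  | .hole => .hole
  | .subst e₁ e₂ => (e₁.eval ν).plug (e₂.eval ν)

/-- The multiset of register occurrences of an expression. -/
def occs : TExpr F ar X → Multiset X
  | .node _ ch => ∑ i, (ch i).occs
  | .reg x => {x}
  | .hole => 0
  | .subst e₁ e₂ => e₁.occs + e₂.occs

end TExpr

/-- A (copyless) streaming string-to-tree transducer: a deterministic machine
with finitely many states and registers holding parameterized terms, updated at
each step by copyless expressions (each register is used at most once on the
right-hand sides of a transition, and at most once in an output expression). -/
structure SSTT (σ F : Type*) (ar : F → ℕ) where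
  Q : Type
  finQ : Fintype Q
  q0 : Q
  X : Type
  finX : Fintype X
  δ : Q → σ → Q
  ρ : Q → σ → X → TExpr F ar X
  μ : Q → Option (TExpr F ar X)
  copyless : ∀ q a, (finX.elems.val.bind fun y => (ρ q a y).occs).Nodup
  copylessOut : ∀ q e, μ q = some e → e.occs.Nodup

namespace SSTT

variable {σ F : Type*} {ar : F → ℕ}

/-- One step of the transducer. -/
def step (T : SSTT σ F ar) (cfg : T.Q × (T.X → PTerm F ar)) (a : σ) :
    T.Q × (T.X → PTerm F ar) :=
  (T.δ cfg.1 a, fun x => (T.ρ cfg.1 a x).eval cfg.2)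

/-- The configuration reached on input `w` (registers initialized to `?`). -/
def run (T : SSTT σ F ar) (w : List σ) : T.Q × (T.X → PTerm F ar) :=
  w.foldl T.step (T.q0, fun _ => PTerm.hole)

/-- The (partial) string-to-term transduction computed by the transducer. -/
def out (T : SSTT σ F ar) (w : List σ) : Option (PTerm F ar) :=
  (T.μ (T.run w).1).map (·.eval (T.run w).2)

end SSTT

/-- A (partial) cost function `f : Σ* → D` is regular with respect to the cost
model given by the ranked alphabet `(F, ar)`, the regular set of terms described
by the predicate `P`, and the interpretation `interp`, if there is a regular
string-to-term transduction (given by an SSTT) producing closed terms in `P`,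
whose composition with term evaluation is `f`. -/
def RegularCostFn {σ F D : Type*} (ar : F → ℕ)
    (interp : ∀ f : F, (Fin (ar f) → D) → D) (h : D)
    (P : PTerm F ar → Prop) (f : List σ → Option D) : Prop :=
  ∃ T : SSTT σ F ar,
    ∀ w, (∀ t, T.out w = some t → P t ∧ t.Closed) ∧
      (T.out w).map (PTerm.evalD interp h) = f w

/-!
Run `T₁`, `T₂` and a DFA for `L` in parallel, with the registers of `T₁` and `T₂` kept apart
as a disjoint union; at the end, output `T₁`'s expression if the DFA accepts and `T₂`'s
otherwise. Renaming registers injectively preserves copylessness, and the two register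
banks are disjoint, so the product transducer is again copyless.
-/

namespace TExpr

variable {F : Type*} {ar : F → ℕ} {X Y : Type*}

def rmap (g : X → Y) : TExpr F ar X → TExpr F ar Y
  | .node f ch => .node f (fun i => (ch i).rmap g)
  | .reg x => .reg (g x)
  | .hole => .hole
  | .subst e₁ e₂ => .subst (e₁.rmap g) (e₂.rmap g)

theorem eval_rmap (g : X → Y) (ν : Y → PTerm F ar) (e : TExpr F ar X) :
    (e.rmap g).eval ν = e.eval (ν ∘ g) := by
  induction e with
  | node f ch ih => simp only [rmap, eval, ih]
  | reg x => rfl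
  | hole => rfl
  | subst e₁ e₂ ih₁ ih₂ => simp only [rmap, eval, ih₁, ih₂]

theorem occs_rmap (g : X → Y) (e : TExpr F ar X) :
    (e.rmap g).occs = e.occs.map g := by
  induction e with
  | node f ch ih =>
      simp only [rmap, occs, ih]
      exact (map_sum (Multiset.mapAddMonoidHom g) _ _).symm
  | reg x => rfl
  | hole => rfl
  | subst e₁ e₂ ih₁ ih₂ => simp only [rmap, occs, ih₁, ih₂, Multiset.map_add]

theorem nodup_occs_rmap {g : X → Y} (hg : Function.Injective g) {e : TExpr F ar X}
    (he : e.occs.Nodup) : (e.rmap g).occs.Nodup := by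
  rw [occs_rmap]
  exact he.map hg

variable {X₁ X₂ : Type*}

def sumElimRmap (ρ₁ : X₁ → TExpr F ar X₁) (ρ₂ : X₂ → TExpr F ar X₂) :
    X₁ ⊕ X₂ → TExpr F ar (X₁ ⊕ X₂) :=
  Sum.elim (fun x => (ρ₁ x).rmap Sum.inl) (fun x => (ρ₂ x).rmap Sum.inr)

theorem eval_sumElimRmap (ρ₁ : X₁ → TExpr F ar X₁) (ρ₂ : X₂ → TExpr F ar X₂)
    (ν₁ : X₁ → PTerm F ar) (ν₂ : X₂ → PTerm F ar) :
    (fun x => (sumElimRmap ρ₁ ρ₂ x).eval (Sum.elim ν₁ ν₂)) =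
      Sum.elim (fun x => (ρ₁ x).eval ν₁) (fun x => (ρ₂ x).eval ν₂) := by
  funext x
  cases x <;> simp only [sumElimRmap, Sum.elim_inl, Sum.elim_inr, eval_rmap] <;> rfl

theorem nodup_bind_occs_sumElimRmap [Fintype X₁] [Fintype X₂]
    {ρ₁ : X₁ → TExpr F ar X₁} {ρ₂ : X₂ → TExpr F ar X₂}
    (h₁ : ((Finset.univ : Finset X₁).val.bind fun x => (ρ₁ x).occs).Nodup)
    (h₂ : ((Finset.univ : Finset X₂).val.bind fun x => (ρ₂ x).occs).Nodup) :
    ((Finset.univ : Finset (X₁ ⊕ X₂)).val.bind fun x => (sumElimRmap ρ₁ ρ₂ x).occs).Nodup := by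
  rw [← Finset.univ_disjSum_univ, Finset.val_disjSum, Multiset.disjSum, Multiset.add_bind,
    Multiset.bind_map, Multiset.bind_map]
  simp only [sumElimRmap, Sum.elim_inl, Sum.elim_inr, occs_rmap]
  rw [← Multiset.map_bind, ← Multiset.map_bind, Multiset.nodup_add]
  refine ⟨h₁.map Sum.inl_injective, h₂.map Sum.inr_injective,
    Multiset.disjoint_left.mpr fun hx hx' => ?_⟩
  obtain ⟨y, -, rfl⟩ := Multiset.mem_map.1 hx
  obtain ⟨z, -, hz⟩ := Multiset.mem_map.1 hx'
  exact Sum.inr_ne_inl hz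

end TExpr

namespace SSTT

variable {σ F : Type*} {ar : F → ℕ} {S : Type} [Fintype S]

open Classical in
noncomputable def choice (M : DFA σ S) (T₁ T₂ : SSTT σ F ar) : SSTT σ F ar :=
  letI := T₁.finQ; letI := T₂.finQ; letI := T₁.finX; letI := T₂.finX
  { Q := T₁.Q × T₂.Q × S
    finQ := inferInstance
    q0 := (T₁.q0, T₂.q0, M.start)
    X := T₁.X ⊕ T₂.X
    finX := inferInstance
    δ := fun q a => (T₁.δ q.1 a, T₂.δ q.2.1 a, M.step q.2.2 a)
    ρ := fun q a => TExpr.sumElimRmap (T₁.ρ q.1 a) (T₂.ρ q.2.1 a)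
    μ := fun q =>
      if q.2.2 ∈ M.accept then (T₁.μ q.1).map (·.rmap Sum.inl)
      else (T₂.μ q.2.1).map (·.rmap Sum.inr)
    copyless := fun q a =>
      TExpr.nodup_bind_occs_sumElimRmap (T₁.copyless q.1 a) (T₂.copyless q.2.1 a)
    copylessOut := fun q e he => by
      split_ifs at he
      · obtain ⟨e₁, he₁, rfl⟩ := Option.map_eq_some_iff.1 he
        exact TExpr.nodup_occs_rmap Sum.inl_injective (T₁.copylessOut _ _ he₁)
      · obtain ⟨e₂, he₂, rfl⟩ := Option.map_eq_some_iff.1 he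
        exact TExpr.nodup_occs_rmap Sum.inr_injective (T₂.copylessOut _ _ he₂) }

variable (M : DFA σ S) (T₁ T₂ : SSTT σ F ar)

def choiceCfg (c₁ : T₁.Q × (T₁.X → PTerm F ar)) (c₂ : T₂.Q × (T₂.X → PTerm F ar)) (s : S) :
    (choice M T₁ T₂).Q × ((choice M T₁ T₂).X → PTerm F ar) :=
  ((c₁.1, c₂.1, s), Sum.elim c₁.2 c₂.2)

theorem step_choiceCfg (c₁ : T₁.Q × (T₁.X → PTerm F ar)) (c₂ : T₂.Q × (T₂.X → PTerm F ar))
    (s : S) (a : σ) :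
    (choice M T₁ T₂).step (choiceCfg M T₁ T₂ c₁ c₂ s) a =
      choiceCfg M T₁ T₂ (T₁.step c₁ a) (T₂.step c₂ a) (M.step s a) :=
  congrArg _ (TExpr.eval_sumElimRmap _ _ c₁.2 c₂.2)

theorem foldl_step_choiceCfg (w : List σ) (c₁ : T₁.Q × (T₁.X → PTerm F ar))
    (c₂ : T₂.Q × (T₂.X → PTerm F ar)) (s : S) :
    w.foldl (choice M T₁ T₂).step (choiceCfg M T₁ T₂ c₁ c₂ s) =
      choiceCfg M T₁ T₂ (w.foldl T₁.step c₁) (w.foldl T₂.step c₂) (M.evalFrom s w) := by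
  induction w generalizing c₁ c₂ s with
  | nil => rfl
  | cons a w ih => simp only [List.foldl_cons, step_choiceCfg, ih, DFA.evalFrom_cons]

theorem run_choice (w : List σ) :
    (choice M T₁ T₂).run w = choiceCfg M T₁ T₂ (T₁.run w) (T₂.run w) (M.eval w) := by
  have hinit : ((choice M T₁ T₂).q0, fun _ => PTerm.hole) =
      choiceCfg M T₁ T₂ (T₁.q0, fun _ => PTerm.hole) (T₂.q0, fun _ => PTerm.hole) M.start := by
    refine congrArg _ (funext fun x => ?_)
    cases x <;> rfl
  rw [run, hinit, foldl_step_choiceCfg]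
  rfl

open Classical in
theorem out_choice (w : List σ) :
    (choice M T₁ T₂).out w = if w ∈ M.accepts then T₁.out w else T₂.out w := by
  rw [out, run_choice, DFA.mem_accepts]
  by_cases hw : M.eval w ∈ M.accept
  · simp only [choiceCfg, choice, if_pos hw, out, Option.map_map]
    cases T₁.μ (T₁.run w).1 <;> simp [TExpr.eval_rmap]
  · simp only [choiceCfg, choice, if_neg hw, out, Option.map_map]
    cases T₂.μ (T₂.run w).1 <;> simp [TExpr.eval_rmap]

end SSTT

open Classical in
/-- Closure of regular cost functions under regular choice: if `f₁` and `f₂` are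
regular with respect to a cost model and `L ⊆ Σ*` is a regular language, then the
choice function mapping `w` to `f₁(w)` if `w ∈ L` and to `f₂(w)` otherwise is also
regular with respect to that cost model. -/
theorem RegularCostFn.choice {σ F D : Type*} (ar : F → ℕ)
    (interp : ∀ f : F, (Fin (ar f) → D) → D) (h : D)
    (P : PTerm F ar → Prop) (f₁ f₂ : List σ → Option D)
    (L : Language σ) (hL : L.IsRegular)
    (hf₁ : RegularCostFn ar interp h P f₁)
    (hf₂ : RegularCostFn ar interp h P f₂) :
    RegularCostFn ar interp h P (fun w => if w ∈ L then f₁ w else f₂ w) := by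
  obtain ⟨S, _, M, rfl⟩ := hL
  obtain ⟨T₁, hT₁⟩ := hf₁
  obtain ⟨T₂, hT₂⟩ := hf₂
  refine ⟨SSTT.choice M T₁ T₂, fun w => ?_⟩
  rw [SSTT.out_choice]
  by_cases hw : w ∈ M.accepts
  · simpa only [if_pos hw] using hT₁ w
  · simpa only [if_neg hw] using hT₂ w
end

section
/- The function f(w) = |w|² on strings over a nonempty alphabet is not computable by any cost register automaton over the cost model (ℕ, +c). -/
/-- A cost register automaton (CRA) over the increment grammar `G(⊗c)`:
a deterministic finite-state machine with finitely many write-only registers;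
at each step every register is updated either to `y ⊗ c` (a register combined
with a constant) or to a constant `c`.  The output at a state, when defined, is
such an expression over the final register values. -/
structure IncCRA (σ D : Type*) where
  Q : Type*
  finQ : Fintype Q
  q0 : Q
  X : Type*
  finX : Fintype X
  δ : Q → σ → Q
  /-- `ρ q a x = .inl (y, c)` means `x := y ⊗ c`; `ρ q a x = .inr c` means `x := c`. -/
  ρ : Q → σ → X → (X × D) ⊕ D
  μ : Q → Option ((X × D) ⊕ D)

namespace IncCRA

variable {σ D : Type*}

/-- Value of an update expression under a register valuation, for the
interpretation `op` of `⊗`. -/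
def evalE (M : IncCRA σ D) (op : D → D → D) (ν : M.X → D) : (M.X × D) ⊕ D → D
  | .inl (y, c) => op (ν y) c
  | .inr c => c

/-- One step of the machine on input symbol `a`. -/
def step (M : IncCRA σ D) (op : D → D → D) (cfg : M.Q × (M.X → D)) (a : σ) :
    M.Q × (M.X → D) :=
  (M.δ cfg.1 a, fun x => M.evalE op cfg.2 (M.ρ cfg.1 a x))

/-- The configuration reached on input word `w`, starting with all registers
holding the initial value `init`. -/
def run (M : IncCRA σ D) (op : D → D → D) (init : D) (w : List σ) : M.Q × (M.X → D) :=
  w.foldl (M.step op) (M.q0, fun _ => init)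

/-- The (partial) output of the machine on input word `w`. -/
def output (M : IncCRA σ D) (op : D → D → D) (init : D) (w : List σ) : Option D :=
  (M.μ (M.run op init w).1).map (M.evalE op (M.run op init w).2)

end IncCRA

/-- The function `f(w) = |w|²` on strings over a nonempty alphabet is not computable
by any cost register automaton over the cost model `(ℕ, +c)`. -/
theorem no_IncCRA_computes_length_squared {σ : Type*} [Nonempty σ] :
    ¬ ∃ M : IncCRA σ ℕ, ∀ w : List σ,
        M.output (· + ·) 0 w = some (w.length ^ 2) := by
  rintro ⟨M, hM⟩
  letI : Fintype M.Q := M.finQ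
  letI : Fintype M.X := M.finX
  obtain ⟨a⟩ := ‹Nonempty σ›
  set ec : (M.X × ℕ) ⊕ ℕ → ℕ := fun e => match e with
    | .inl (_, c) => c
    | .inr c => c with hec
  set C : ℕ := (Finset.univ.sup fun p : M.Q × M.X => ec (M.ρ p.1 a p.2)) ⊔
      (Finset.univ.sup fun q : M.Q => (M.μ q).elim 0 ec) with hC
  have hρ : ∀ q x, ec (M.ρ q a x) ≤ C := fun q x =>
    le_sup_of_le_left (Finset.le_sup (f := fun p : M.Q × M.X => ec (M.ρ p.1 a p.2)) (Finset.mem_univ (q, x)))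
  have hμ : ∀ q, (M.μ q).elim 0 ec ≤ C := fun q =>
    le_sup_of_le_right (Finset.le_sup (f := fun q : M.Q => (M.μ q).elim 0 ec) (Finset.mem_univ q))
  have hbound : ∀ n x, (M.run (· + ·) 0 (List.replicate n a)).2 x ≤ n * C := by
    intro n
    induction n with
    | zero => intro x; simp [IncCRA.run]
    | succ n ih =>
      intro x
      have hrun : M.run (· + ·) 0 (List.replicate (n + 1) a) =
          M.step (· + ·) (M.run (· + ·) 0 (List.replicate n a)) a := by
        rw [List.replicate_succ' (n := n)]
        simp [IncCRA.run, List.foldl_append]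
      rw [hrun]
      simp only [IncCRA.step]
      rcases h : M.ρ (M.run (· + ·) 0 (List.replicate n a)).1 a x with e | c
      · obtain ⟨y, c⟩ := e
        have h1 := ih y
        have h2 : ec (Sum.inl (y, c) : (M.X × ℕ) ⊕ ℕ) ≤ C := h ▸ hρ _ x
        simp only [hec] at h2
        simp only [IncCRA.evalE]
        calc (M.run (· + ·) 0 (List.replicate n a)).2 y + c ≤ n * C + C := by omega
          _ = (n + 1) * C := by ring
      · have h2 : ec (Sum.inr c : (M.X × ℕ) ⊕ ℕ) ≤ C := h ▸ hρ _ x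
        simp only [hec] at h2
        simp only [IncCRA.evalE]
        calc c ≤ C := h2
          _ ≤ (n + 1) * C := Nat.le_mul_of_pos_left _ (by omega)
  have hout : ∀ n, n ^ 2 ≤ n * C + C := by
    intro n
    have this := hM (List.replicate n a)
    simp only [IncCRA.output, List.length_replicate] at this
    rcases h : M.μ (M.run (· + ·) 0 (List.replicate n a)).1 with _ | e
    · rw [h] at this; simp at this
    · rw [h] at this
      simp only [Option.map_some, Option.some.injEq] at this
      have hμ' := hμ (M.run (· + ·) 0 (List.replicate n a)).1
      rw [h] at hμ'
      simp only [Option.elim] at hμ'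
      rcases e with ⟨y, c⟩ | c
      · simp only [hec] at hμ'
        simp only [IncCRA.evalE] at this
        have := hbound n y
        omega
      · simp only [hec] at hμ'
        simp only [IncCRA.evalE] at this
        omega
  have := hout (C + 1)
  nlinarith [this]
end

section
/- The function f(w) = 2^{|w|} on strings over the unary alphabet {a} is computable by a (copyful) CRA over (ℕ, +) but is not computable by any copyless CRA over (ℕ, +), since any copyless CRA over (ℕ, +) computes a function whose values are bounded linearly in the input length. -/
/-- A cost register automaton over the additive grammar `G(⊗)` for a commutative
monoid `(D, ⊗)` (written additively): a deterministic finite-state machine with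
finitely many write-only registers, where each register is updated at each step to
a `⊗`-sum of registers (with multiplicities) and a constant. -/
structure AddCRA (σ D : Type*) where
  Q : Type*
  finQ : Fintype Q
  q0 : Q
  X : Type*
  finX : Fintype X
  δ : Q → σ → Q
  /-- `ρ q a x = (coef, c)` means `x := (⊗_y coef y • y) ⊗ c`. -/
  ρ : Q → σ → X → (X → ℕ) × D
  μ : Q → Option ((X → ℕ) × D)

namespace AddCRA

variable {σ D : Type*} [AddCommMonoid D]

/-- Value of an update expression under a register valuation. -/
def evalE (M : AddCRA σ D) (ν : M.X → D) (e : (M.X → ℕ) × D) : D :=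
  letI := M.finX
  (∑ x, e.1 x • ν x) + e.2

/-- One step of the machine on input symbol `a`. -/
def step (M : AddCRA σ D) (cfg : M.Q × (M.X → D)) (a : σ) : M.Q × (M.X → D) :=
  (M.δ cfg.1 a, fun x => M.evalE cfg.2 (M.ρ cfg.1 a x))

/-- The configuration reached on input word `w`, registers initialized to `0`. -/
def run (M : AddCRA σ D) (w : List σ) : M.Q × (M.X → D) :=
  w.foldl M.step (M.q0, fun _ => 0)

/-- The (partial) output of the machine on input word `w`. -/
def output (M : AddCRA σ D) (w : List σ) : Option D :=
  (M.μ (M.run w).1).map (M.evalE (M.run w).2)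

/-- A CRA is copyless if in each transition every register appears at most once
across all right-hand sides of register updates, and at most once in each output
expression. -/
def Copyless (M : AddCRA σ D) : Prop :=
  (∀ q a (x : M.X), (letI := M.finX; ∑ y, (M.ρ q a y).1 x) ≤ 1) ∧
  (∀ q e, M.μ q = some e → ∀ x, e.1 x ≤ 1)

end AddCRA

/-!
A register updated by `x := x + x + 1` holds `2 ^ n - 1` after `n` steps, so copying yields
exponential growth. Without copying, the old value of each register flows into at most one new
register, so the total content of all registers grows by at most a constant per step; the output
is then bounded linearly in the input length, and `2 ^ n` is not.
-/

attribute [local instance] CanonicallyOrderedAdd.toIsOrderedAddMonoid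

theorem nsmul_le_self_of_le_one {D : Type*} [AddCommMonoid D] [Preorder D]
    [CanonicallyOrderedAdd D] {n : ℕ} (hn : n ≤ 1) (d : D) : n • d ≤ d := by
  simpa using nsmul_le_nsmul_left (a := d) zero_le hn

theorem exists_mul_add_lt_two_pow (a b : ℕ) : ∃ n, a * n + b < 2 ^ n := by
  refine ⟨2 * (2 * a + b + 1), ?_⟩
  generalize hk : 2 * a + b + 1 = k
  calc a * (2 * k) + b ≤ k * k := by rw [← hk]; nlinarith
    _ < 2 ^ k * 2 ^ k := Nat.mul_self_lt_mul_self Nat.lt_two_pow_self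
    _ = 2 ^ (2 * k) := by rw [two_mul, pow_add]

namespace AddCRA

attribute [local instance] AddCRA.finQ AddCRA.finX

variable {σ D : Type*}

theorem run_append_singleton [AddCommMonoid D] (M : AddCRA σ D) (w : List σ) (a : σ) :
    M.run (w ++ [a]) = M.step (M.run w) a :=
  List.foldl_append ..

def doubling.{u, v} (σ : Type*) : AddCRA.{_, _, u, v} σ ℕ where
  Q := PUnit
  finQ := inferInstance
  q0 := PUnit.unit
  X := PUnit
  finX := inferInstance
  δ _ _ := PUnit.unit
  ρ _ _ _ := (fun _ => 2, 1)
  μ _ := some (fun _ => 1, 1)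

theorem doubling_run_add_one (w : List σ) :
    ((doubling σ).run w).2 PUnit.unit + 1 = 2 ^ w.length := by
  induction w using List.reverseRecOn with
  | nil => rfl
  | append_singleton w a ih =>
    rw [run_append_singleton, List.length_append, List.length_singleton, pow_succ, ← ih]
    change 2 * _ + 1 + 1 = _
    ring

theorem doubling_output (w : List σ) : (doubling σ).output w = some (2 ^ w.length) := by
  change some (1 * _ + 1) = _
  rw [one_mul, doubling_run_add_one]

section Copyless

variable [AddCommMonoid D] [Preorder D] [CanonicallyOrderedAdd D] {M : AddCRA σ D}

theorem evalE_le_sum_add {ν : M.X → D} {e : (M.X → ℕ) × D} (he : ∀ x, e.1 x ≤ 1) :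
    M.evalE ν e ≤ ∑ x, ν x + e.2 :=
  add_le_add_left (Finset.sum_le_sum fun x _ => nsmul_le_self_of_le_one (he x) (ν x)) _

theorem Copyless.sum_step_le (hM : M.Copyless) (q : M.Q) (a : σ) (ν : M.X → D) :
    ∑ x, (M.step (q, ν) a).2 x ≤ ∑ x, ν x + ∑ x, (M.ρ q a x).2 := by
  -- Exchanging the sums collects the total multiplicity of each old register, which is `≤ 1`.
  have copies : ∑ x, ∑ y, (M.ρ q a x).1 y • ν y ≤ ∑ y, ν y := by
    rw [Finset.sum_comm]
    refine Finset.sum_le_sum fun y _ => ?_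
    rw [← Finset.sum_smul]
    exact nsmul_le_self_of_le_one (hM.1 q a y) (ν y)
  simpa only [step, evalE, Finset.sum_add_distrib] using add_le_add_left copies _

theorem Copyless.sum_run_le (hM : M.Copyless) {A : D}
    (hA : ∀ q a, ∑ x, (M.ρ q a x).2 ≤ A) (w : List σ) :
    ∑ x, (M.run w).2 x ≤ w.length • A := by
  induction w using List.reverseRecOn with
  | nil => simp [run]
  | append_singleton w a ih =>
    rw [run_append_singleton, List.length_append, List.length_singleton, succ_nsmul]
    exact (hM.sum_step_le _ a _).trans (add_le_add ih (hA _ a))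

theorem Copyless.exists_output_le [Fintype σ] (hM : M.Copyless) :
    ∃ A B : D, ∀ w d, M.output w = some d → d ≤ w.length • A + B := by
  refine ⟨∑ p : M.Q × σ, ∑ x, (M.ρ p.1 p.2 x).2,
    ∑ q, ((M.μ q).map Prod.snd).getD 0, fun w d hd => ?_⟩
  obtain ⟨e, he, rfl⟩ := Option.map_eq_some_iff.mp hd
  have hA : ∀ q a, ∑ x, (M.ρ q a x).2 ≤ ∑ p : M.Q × σ, ∑ x, (M.ρ p.1 p.2 x).2 := fun q a =>
    Finset.single_le_sum_of_canonicallyOrdered (f := fun p : M.Q × σ => ∑ x, (M.ρ p.1 p.2 x).2)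
      (Finset.mem_univ (q, a))
  have hB : e.2 ≤ ∑ q, ((M.μ q).map Prod.snd).getD 0 := by
    simpa [he] using Finset.single_le_sum_of_canonicallyOrdered
      (f := fun q => ((M.μ q).map Prod.snd).getD 0) (Finset.mem_univ (M.run w).1)
  calc M.evalE (M.run w).2 e ≤ ∑ x, (M.run w).2 x + e.2 := evalE_le_sum_add (hM.2 _ e he)
    _ ≤ _ := add_le_add (hM.sum_run_le hA w) hB

end Copyless

end AddCRA

/-- The function `f(w) = 2^{|w|}` over the unary alphabet is computable by a
(copyful) CRA over `(ℕ, +)`, but not by any copyless CRA over `(ℕ, +)`: indeed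
every copyless CRA over `(ℕ, +)` computes a function whose values are bounded
linearly in the input length. -/
theorem two_pow_copyful_not_copyless :
    (∃ M : AddCRA Unit ℕ, ∀ w : List Unit, M.output w = some (2 ^ w.length)) ∧
    (∀ M : AddCRA Unit ℕ, M.Copyless →
      ∃ a b : ℕ, ∀ (w : List Unit) (d : ℕ),
        M.output w = some d → d ≤ a * w.length + b) ∧
    (∀ M : AddCRA Unit ℕ, M.Copyless →
      ¬ ∀ w : List Unit, M.output w = some (2 ^ w.length)) := by
  refine ⟨⟨_, AddCRA.doubling_output⟩, fun M hM => ?_, fun M hM hpow => ?_⟩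
  · obtain ⟨a, b, h⟩ := hM.exists_output_le
    exact ⟨a, b, fun w d hd => by simpa [mul_comm] using h w d hd⟩
  · obtain ⟨a, b, h⟩ := hM.exists_output_le
    obtain ⟨n, hn⟩ := exists_mul_add_lt_two_pow a b
    have := h (List.replicate n ()) _ (hpow _)
    rw [List.length_replicate, smul_eq_mul, mul_comm] at this
    omega
end

section
/- For every k ∈ ℕ, the cost function f_k over the unary alphabet {1} defined by f_k(x) = ((x mod k) + 1) · x (where x is the input length) is computable by a CRA over (ℕ, +c) with k registers, but not computable by any CRA over (ℕ, +c) with fewer than k registers. -/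
/-!
Upper bound: with states `ℤ/k` counting the input length modulo `k`, let register `r` gain `r + 1`
at every step. After `n` letters it holds `(r + 1) n`, and the state `n mod k` selects the register
to output.

Lower bound: since updates only add constants, the output `i` letters after any configuration is,
as a function of the register values, undefined, a constant, or a single register plus a constant,
with constants at most `(i + 1) C` for a bound `C` on the machine's constants. After
`n = k (k + C + 1)` letters, the outputs `(i + 1)(n + i)`, `i < k`, of the next `k` steps all
exceed `k C` and are pairwise more than `k C` apart, so they are read off `k` distinct registers.
-/

namespace IncCRA

section Composition

variable {σ D X : Type*}

def outputFrom (M : IncCRA σ D) (op : D → D → D) (cfg : M.Q × (M.X → D)) (w : List σ) :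
    Option D :=
  (M.μ (w.foldl (M.step op) cfg).1).map (M.evalE op (w.foldl (M.step op) cfg).2)

theorem output_append (M : IncCRA σ D) (op : D → D → D) (init : D) (u v : List σ) :
    M.output op init (u ++ v) = M.outputFrom op (M.run op init u) v := by
  simp only [output, outputFrom, run, List.foldl_append]

/-- Substitutes the update expression `ρ y` for every register `y`. -/
def substE (op : D → D → D) (ρ : X → (X × D) ⊕ D) : (X × D) ⊕ D → (X × D) ⊕ D
  | .inl (y, c) => Sum.elim (fun zd => .inl (zd.1, op zd.2 c)) (fun d => .inr (op d c)) (ρ y)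
  | .inr c => .inr c

theorem evalE_substE (M : IncCRA σ D) (op : D → D → D) [Std.Associative op]
    (ρ : M.X → (M.X × D) ⊕ D) (ν : M.X → D) (e : (M.X × D) ⊕ D) :
    M.evalE op ν (substE op ρ e) = M.evalE op (fun x => M.evalE op ν (ρ x)) e := by
  rcases e with ⟨y, c⟩ | c
  · rcases hρ : ρ y with ⟨z, d⟩ | d <;> simp [substE, evalE, hρ, Std.Associative.assoc]
  · rfl

/-- The output after reading `w` from state `q`, as an expression in the current registers. -/
def outputExpr (M : IncCRA σ D) (op : D → D → D) :
    M.Q → List σ → Option ((M.X × D) ⊕ D)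
  | q, [] => M.μ q
  | q, a :: w => (M.outputExpr op (M.δ q a) w).map (substE op (M.ρ q a))

theorem outputFrom_eq_map_outputExpr (M : IncCRA σ D) (op : D → D → D) [Std.Associative op]
    (q : M.Q) (ν : M.X → D) (w : List σ) :
    M.outputFrom op (q, ν) w = (M.outputExpr op q w).map (M.evalE op ν) := by
  induction w generalizing q ν with
  | nil => rfl
  | cons a w ih =>
    simp only [outputExpr, Option.map_map]
    exact (ih _ _).trans (congrArg (Option.map · _) (funext fun e => (evalE_substE ..).symm))

end Composition

section Constants

variable {σ X : Type*}

def constE : (X × ℕ) ⊕ ℕ → ℕ := Sum.elim Prod.snd id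

theorem constE_substE_le (ρ : X → (X × ℕ) ⊕ ℕ) {C : ℕ} (hρ : ∀ x, constE (ρ x) ≤ C)
    (e : (X × ℕ) ⊕ ℕ) :
    constE (substE (· + ·) ρ e) ≤ C + constE e := by
  rcases e with ⟨y, c⟩ | c
  · have := hρ y
    rcases hy : ρ y with ⟨z, d⟩ | d <;>
      simp only [hy, substE, constE, Sum.elim_inl, Sum.elim_inr, id] at this ⊢ <;> omega
  · exact Nat.le_add_left _ _

variable (M : IncCRA σ ℕ) [Fintype σ]

def constBound : ℕ :=
  letI := M.finQ; letI := M.finX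
  (Finset.univ.sup fun p : M.Q × σ × M.X => constE (M.ρ p.1 p.2.1 p.2.2)) ⊔
    Finset.univ.sup fun q => (M.μ q).elim 0 constE

theorem constE_ρ_le_constBound (q : M.Q) (a : σ) (x : M.X) :
    constE (M.ρ q a x) ≤ M.constBound := by
  let := M.finQ; let := M.finX
  exact le_sup_of_le_left
    (Finset.le_sup (f := fun p : M.Q × σ × M.X => constE (M.ρ p.1 p.2.1 p.2.2)) 
      (Finset.mem_univ (q, a, x)))

theorem constE_le_constBound_of_mem_μ {q : M.Q} {e : (M.X × ℕ) ⊕ ℕ} (he : e ∈ M.μ q) :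
    constE e ≤ M.constBound := by
  let := M.finQ; let := M.finX
  refine le_sup_of_le_right (le_trans ?_ (Finset.le_sup (f := fun q => (M.μ q).elim 0 constE)
    (Finset.mem_univ q)))
  simp [Option.mem_def.mp he]

theorem constE_outputExpr_le {q : M.Q} {w : List σ} {e : (M.X × ℕ) ⊕ ℕ}
    (he : e ∈ M.outputExpr (· + ·) q w) : constE e ≤ (w.length + 1) * M.constBound := by
  induction w generalizing q e with
  | nil => simpa using M.constE_le_constBound_of_mem_μ he
  | cons a w ih =>
    obtain ⟨e', he', rfl⟩ := Option.mem_map.mp he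
    calc constE (substE (· + ·) (M.ρ q a) e')
        ≤ M.constBound + constE e' := constE_substE_le _ (M.constE_ρ_le_constBound q a) e'
      _ ≤ M.constBound + (w.length + 1) * M.constBound := Nat.add_le_add_left (ih he') _
      _ = ((a :: w).length + 1) * M.constBound := by simp only [List.length_cons]; ring

theorem exists_register_of_outputFrom_eq {q : M.Q} {ν : M.X → ℕ} {w : List σ} {v : ℕ}
    (hv : M.outputFrom (· + ·) (q, ν) w = some v) (hlarge : (w.length + 1) * M.constBound < v) :
    ∃ x c, c ≤ (w.length + 1) * M.constBound ∧ ν x + c = v := by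
  rw [outputFrom_eq_map_outputExpr] at hv
  obtain ⟨e, he, rfl⟩ := Option.map_eq_some_iff.mp hv
  have hc := M.constE_outputExpr_le he
  rcases e with ⟨x, c⟩ | c
  · exact ⟨x, c, hc, rfl⟩
  · exact absurd hc (not_le.mpr hlarge)

end Constants

section Unary

universe uQ uX

def countingCRA (k : ℕ) [NeZero k] : IncCRA Unit ℕ where
  Q := ULift.{uQ} (ZMod k)
  finQ := inferInstance
  q0 := ⟨0⟩
  X := ULift.{uX} (ZMod k)
  finX := inferInstance
  δ q _ := ⟨q.down + 1⟩
  ρ _ _ r := .inl (r, r.down.val + 1)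
  μ q := some (.inl (⟨q.down⟩, 0))

theorem countingCRA_foldl (k : ℕ) [NeZero k] (w : List Unit) (q : (countingCRA.{uQ, uX} k).Q)
    (ν : (countingCRA k).X → ℕ) :
    w.foldl ((countingCRA k).step (· + ·)) (q, ν) =
      (⟨q.down + w.length⟩, fun r => ν r + (r.down.val + 1) * w.length) := by
  induction w generalizing q ν with
  | nil => simp only [List.foldl_nil, List.length_nil, Nat.cast_zero, add_zero, mul_zero]; rfl
  | cons a w ih =>
    refine (ih _ _).trans (Prod.ext (congrArg ULift.up ?_) (funext fun r => ?_))
    · simp only [countingCRA, List.length_cons]; push_cast; ring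
    · simp only [countingCRA, evalE, List.length_cons]; ring

theorem countingCRA_output (k : ℕ) [NeZero k] (w : List Unit) :
    (countingCRA.{uQ, uX} k).output (· + ·) 0 w = some ((w.length % k + 1) * w.length) := by
  rw [output, run, countingCRA_foldl]
  simp [countingCRA, evalE, ZMod.val_natCast]

theorem card_X_countingCRA (k : ℕ) [NeZero k] :
    @Fintype.card (countingCRA.{uQ, uX} k).X (countingCRA k).finX = k :=
  (Fintype.card_ulift _).trans (ZMod.card k)

theorem add_mul_add_lt_mul_add {i j k n B : ℕ} (hij : i < j) (hjk : j < k) (hn : k * k + B < n) :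
    (i + 1) * (n + i) + B < (j + 1) * (n + j) := by
  nlinarith

theorem le_card_X_of_output_eq (k : ℕ) (hk : 0 < k) (M : IncCRA Unit ℕ)
    (hM : ∀ w : List Unit, M.output (· + ·) 0 w = some ((w.length % k + 1) * w.length)) :
    k ≤ @Fintype.card M.X M.finX := by
  let := M.finX
  obtain ⟨n, ⟨m, rfl⟩, hn⟩ : ∃ n, k ∣ n ∧ k * k + k * M.constBound < n :=
    ⟨k * (k + M.constBound + 1), dvd_mul_right _ _, by nlinarith⟩
  set cfg := M.run (· + ·) 0 (List.replicate (k * m) ())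
  have hreg (i : Fin k) :
      ∃ x c, c ≤ k * M.constBound ∧ cfg.2 x + c = (i + 1) * (k * m + i) := by
    have hout := hM (List.replicate (k * m) () ++ List.replicate i ())
    rw [output_append] at hout
    simp only [List.length_append, List.length_replicate, Nat.mul_add_mod_self_left,
      Nat.mod_eq_of_lt i.isLt] at hout
    have hiC : (i + 1) * M.constBound ≤ k * M.constBound := Nat.mul_le_mul_right _ i.isLt
    have hm : k * m ≤ (i + 1) * (k * m + i) :=
      (Nat.le_add_right _ _).trans (Nat.le_mul_of_pos_left _ i.val.succ_pos)
    obtain ⟨x, c, hc, hxc⟩ := M.exists_register_of_outputFrom_eq hout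
      (by rw [List.length_replicate]; omega)
    exact ⟨x, c, hc.trans (by rwa [List.length_replicate]), hxc⟩
  choose g c hc hgc using hreg
  refine (Fintype.card_fin k).symm.le.trans (Fintype.card_le_of_injective g ?_)
  refine Function.Injective.of_lt_imp_ne fun i j hij hg => ?_
  have hgap := add_mul_add_lt_mul_add hij j.isLt hn
  have hi := hgc i
  have hj := hgc j
  rw [hg] at hi
  linarith [hc j]

end Unary

end IncCRA

/-- For every `k ≥ 1`, the cost function over the unary alphabet defined by
`f_k(x) = ((x mod k) + 1)·x` (where `x` is the input length) is computable by a
CRA over `(ℕ, +c)` with exactly `k` registers, but not by any CRA over `(ℕ, +c)`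
with fewer than `k` registers. -/
theorem fk_needs_k_registers (k : ℕ) (hk : 0 < k) :
    (∃ M : IncCRA Unit ℕ, @Fintype.card M.X M.finX = k ∧
      ∀ w : List Unit, M.output (· + ·) 0 w = some ((w.length % k + 1) * w.length)) ∧
    (∀ M : IncCRA Unit ℕ,
      (∀ w : List Unit, M.output (· + ·) 0 w = some ((w.length % k + 1) * w.length)) →
      k ≤ @Fintype.card M.X M.finX) := by
  have : NeZero k := ⟨hk.ne'⟩
  exact ⟨⟨IncCRA.countingCRA k, IncCRA.card_X_countingCRA k, IncCRA.countingCRA_output k⟩,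
    fun M hM => M.le_card_X_of_output_eq k hk hM⟩
end

section
/- Every copyless CRA over a commutative monoid (D, ⊗) with k registers can be simulated by a (copyful) CRA over (D, ⊗c) with 2^k registers: the new machine keeps one register x_S for each subset S of the original registers, maintaining the invariant that x_S equals the ⊗-sum of the values of the registers in S, and every update of x_S has the form x_{S'} ⊗ c. -/
/-!
Register `S` of the simulating machine stores `∑_{x ∈ S} x`. After a step, the registers of `S`
hold `∑_{x ∈ S} (∑_y n_{x,y} • y + c_x)`; by copylessness every coefficient
`∑_{x ∈ S} n_{x,y}` is `0` or `1`, so this is the old content of the single register indexed by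
the set of `y` with a nonzero coefficient, plus the constant `∑_{x ∈ S} c_x`. The output
expression is handled the same way.
-/

theorem Finset.sum_nsmul_eq_sum_filter_ne_zero {ι M : Type*} [AddCommMonoid M] (s : Finset ι)
    (t : ι → ℕ) (f : ι → M) (ht : ∀ i ∈ s, t i ≤ 1) :
    ∑ i ∈ s, t i • f i = ∑ i ∈ s with t i ≠ 0, f i := by
  rw [Finset.sum_filter]
  refine Finset.sum_congr rfl fun i hi => ?_
  rcases Nat.le_one_iff_eq_zero_or_eq_one.mp (ht i hi) with h | h <;> simp [h]

namespace AddCRA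

universe u v uσ uD uQ uX

variable {σ : Type uσ} {D : Type uD} [AddCommMonoid D] (M : AddCRA.{uσ, uD, uQ, uX} σ D)

attribute [local instance] AddCRA.finQ AddCRA.finX

def evalEAddMonoidHom (ν : M.X → D) : (M.X → ℕ) × D →+ D where
  toFun := M.evalE ν
  map_zero' := by simp [evalE]
  map_add' e e' := by
    simp only [evalE, Prod.fst_add, Prod.snd_add, Pi.add_apply, add_smul, Finset.sum_add_distrib]
    abel

theorem sum_evalE (ν : M.X → D) (S : Finset M.X) (e : M.X → (M.X → ℕ) × D) :
    ∑ x ∈ S, M.evalE ν (e x) = M.evalE ν (∑ x ∈ S, e x) :=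
  (map_sum (M.evalEAddMonoidHom ν) e S).symm

def coeffSupport (t : M.X → ℕ) : Finset M.X :=
  Finset.univ.filter (t · ≠ 0)

theorem evalE_eq_sum_coeffSupport (ν : M.X → D) (e : (M.X → ℕ) × D)
    (he : ∀ y, e.1 y ≤ 1) :
    M.evalE ν e = ∑ y ∈ M.coeffSupport e.1, ν y + e.2 := by
  rw [evalE, Finset.sum_nsmul_eq_sum_filter_ne_zero _ _ _ fun y _ => he y]
  rfl

def subsetUpdate (q : M.Q) (a : σ) (S : Finset M.X) : (M.X → ℕ) × D :=
  ∑ x ∈ S, M.ρ q a x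

noncomputable def toIncExpr (e : (M.X → ℕ) × D) : (Shrink.{v} (Finset M.X) × D) ⊕ D :=
  .inl (equivShrink _ (M.coeffSupport e.1), e.2)

/-- `Shrink` lets the simulating machine live in arbitrary universes. -/
noncomputable def toIncCRA : IncCRA.{uσ, uD, u, v} σ D where
  Q := Shrink.{u} M.Q
  finQ := inferInstance
  q0 := equivShrink _ M.q0
  X := Shrink.{v} (Finset M.X)
  finX := inferInstance
  δ q a := equivShrink _ (M.δ ((equivShrink _).symm q) a)
  ρ q a S := M.toIncExpr (M.subsetUpdate ((equivShrink _).symm q) a ((equivShrink _).symm S))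
  μ q := (M.μ ((equivShrink _).symm q)).map M.toIncExpr

noncomputable def registerEquiv : (toIncCRA.{u, v} M).X ≃ Finset M.X :=
  (equivShrink _).symm

noncomputable def encodeCfg (cfg : M.Q × (M.X → D)) :
    Shrink.{u} M.Q × (Shrink.{v} (Finset M.X) → D) :=
  (equivShrink _ cfg.1, fun S => ∑ x ∈ (equivShrink _).symm S, cfg.2 x)

theorem evalE_toIncExpr (cfg : M.Q × (M.X → D)) (e : (M.X → ℕ) × D)
    (he : ∀ y, e.1 y ≤ 1) :
    (toIncCRA.{u, v} M).evalE (· + ·) (encodeCfg.{u, v} M cfg).2 (M.toIncExpr e) =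
      M.evalE cfg.2 e := by
  rw [M.evalE_eq_sum_coeffSupport _ _ he]
  simp [toIncExpr, encodeCfg, IncCRA.evalE]

variable {M}

theorem Copyless.subsetUpdate_le_one (hM : M.Copyless) (q : M.Q) (a : σ)
    (S : Finset M.X) (y : M.X) : (M.subsetUpdate q a S).1 y ≤ 1 := by
  calc (M.subsetUpdate q a S).1 y = ∑ x ∈ S, (M.ρ q a x).1 y := by
        simp only [subsetUpdate, Prod.fst_sum, Finset.sum_apply]
    _ ≤ ∑ x, (M.ρ q a x).1 y := Finset.sum_le_sum_of_subset S.subset_univ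
    _ ≤ 1 := hM.1 q a y

theorem Copyless.toIncCRA_step (hM : M.Copyless) (cfg : M.Q × (M.X → D)) (a : σ) :
    (toIncCRA.{u, v} M).step (· + ·) (encodeCfg.{u, v} M cfg) a =
      encodeCfg.{u, v} M (M.step cfg a) := by
  refine Prod.ext (by simp [IncCRA.step, toIncCRA, encodeCfg, step]) (funext fun S => ?_)
  calc _ = M.evalE cfg.2 (M.subsetUpdate cfg.1 a ((equivShrink _).symm S)) := by
        simpa [IncCRA.step, toIncCRA, encodeCfg] using
          M.evalE_toIncExpr cfg _ (hM.subsetUpdate_le_one cfg.1 a _)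
    _ = _ := (M.sum_evalE _ _ _).symm

theorem Copyless.toIncCRA_run (hM : M.Copyless) (w : List σ) :
    (toIncCRA.{u, v} M).run (· + ·) 0 w = encodeCfg.{u, v} M (M.run w) := by
  have hinit :
      ((toIncCRA.{u, v} M).q0, fun _ => 0) = encodeCfg.{u, v} M (M.q0, fun _ => 0) := by
    simp [toIncCRA, encodeCfg]
  rw [IncCRA.run, run, ← List.foldl_hom _ hM.toIncCRA_step, ← hinit]
  rfl

theorem Copyless.toIncCRA_output (hM : M.Copyless) (w : List σ) :
    (toIncCRA.{u, v} M).output (· + ·) 0 w = M.output w := by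
  rw [IncCRA.output, output, hM.toIncCRA_run]
  simp only [toIncCRA, encodeCfg, Equiv.symm_apply_apply, Option.map_map]
  exact Option.map_congr fun e he => M.evalE_toIncExpr _ e (hM.2 _ e he)

theorem Copyless.toIncCRA_run_registerEquiv_symm (hM : M.Copyless) (w : List σ)
    (S : Finset M.X) :
    ((toIncCRA.{u, v} M).run (· + ·) 0 w).2 ((registerEquiv.{u, v} M).symm S) =
      ∑ x ∈ S, (M.run w).2 x := by
  rw [hM.toIncCRA_run]
  exact congrArg (∑ x ∈ ·, (M.run w).2 x) ((equivShrink _).symm_apply_apply S)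

end AddCRA

/-- Every copyless CRA over a commutative monoid `(D, ⊗)` with `k` registers can be
simulated by a (copyful) CRA over `(D, ⊗c)` with `2^k` registers: the new machine
has one register `x_S` for each subset `S` of the original registers (so every
update has the form `x_{S'} ⊗ c`), maintaining the invariant that `x_S` equals the
`⊗`-sum of the values of the registers in `S`; in particular it computes the same
function. -/
theorem copylessAdd_to_IncCRA {σ D : Type*} [AddCommMonoid D]
    (M : AddCRA σ D) (hM : M.Copyless) :
    ∃ (M' : IncCRA σ D) (e : M'.X ≃ Finset M.X),
      (∀ w : List σ, M'.output (· + ·) 0 w = M.output w) ∧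
      (∀ (w : List σ) (S : Finset M.X),
        (M'.run (· + ·) 0 w).2 (e.symm S) = ∑ x ∈ S, (M.run w).2 x) :=
  ⟨M.toIncCRA, M.registerEquiv, hM.toIncCRA_output, hM.toIncCRA_run_registerEquiv_symm⟩
end

section
/- If (D, ⊕, ⊗) is a semiring, then every weighted automaton over (D, ⊕, ⊗) with state set P is equivalent to a deterministic CRA over (D, ⊕, ⊗c) whose states are subsets of P and whose registers are indexed by P: the subset construction yields, for each state p, a register x_p whose value after reading w equals the ⊕-sum over all paths from initial states to p of the ⊗-products of weights along the path. -/
/-- A weighted automaton over a semiring `(D, ⊕, ⊗)`, in functional form: initial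
weights, final weights, and transition weights (weight `0̄` meaning absence of a
transition). It computes, on input `w`, the `⊕`-sum over all accepting paths on
`w` of the `⊗`-products of initial, transition, and final weights. -/
structure WAF (σ D : Type*) where
  P : Type
  finP : Fintype P
  ini : P → D
  fin : P → D
  wt : P → σ → P → D

namespace WAF

variable {σ D : Type*} [Semiring D]

/-- The forward vector: `fwd w p` is the `⊕`-sum, over all paths from an initial
state to `p` reading `w`, of the `⊗`-product of the initial weight and the
transition weights along the path. -/
def fwd (W : WAF σ D) (w : List σ) : W.P → D :=
  letI := W.finP
  w.foldl (fun v a p => ∑ p', v p' * W.wt p' a p) W.ini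

/-- The value computed by the weighted automaton on input `w`. -/
def val (W : WAF σ D) (w : List σ) : D :=
  letI := W.finP
  ∑ p, W.fwd w p * W.fin p

end WAF

/-- A (deterministic) cost register automaton over `(D, ⊕, ⊗c)`: registers over
`D` are updated by `⊕`-combinations of terms `x ⊗ c` (registers scaled by
constants) plus a constant; registers may be copied. -/
structure LinCRA (σ D : Type*) where
  Q : Type
  finQ : Fintype Q
  q0 : Q
  X : Type
  finX : Fintype X
  initv : X → D
  δ : Q → σ → Q
  /-- `ρ q a x = (coef, c)` means `x := (⊕_y y ⊗ coef y) ⊕ c`. -/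
  ρ : Q → σ → X → (X → D) × D
  μ : Q → (X → D) × D

namespace LinCRA

variable {σ D : Type*} [Semiring D]

/-- Value of a linear update expression under a register valuation. -/
def evalE (M : LinCRA σ D) (ν : M.X → D) (e : (M.X → D) × D) : D :=
  letI := M.finX
  (∑ x, ν x * e.1 x) + e.2

/-- One step of the machine. -/
def step (M : LinCRA σ D) (cfg : M.Q × (M.X → D)) (a : σ) : M.Q × (M.X → D) :=
  (M.δ cfg.1 a, fun x => M.evalE cfg.2 (M.ρ cfg.1 a x))

/-- The configuration reached on input `w`. -/
def run (M : LinCRA σ D) (w : List σ) : M.Q × (M.X → D) :=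
  w.foldl M.step (M.q0, M.initv)

/-- The output of the machine on input `w`. -/
def val (M : LinCRA σ D) (w : List σ) : D :=
  M.evalE (M.run w).2 (M.μ (M.run w).1)

end LinCRA

/-! The registers of the CRA hold the forward vector of the weighted automaton. Its
recurrence `fwd (w ++ [a]) p = ⊕_{p'} fwd w p' ⊗ wt p' a p` is a linear update with constant
coefficients, so it needs no information from the control state, which can stay at `∅`; the
output `⊕_p fwd w p ⊗ fin p` is again such a combination. -/

namespace LinCRA

variable {σ D : Type*} [Semiring D]

theorem foldl_step_snd_of_ρ_eq (M : LinCRA σ D) (f : σ → M.X → (M.X → D) × D)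
    (hρ : ∀ q a, M.ρ q a = f a) (w : List σ) (cfg : M.Q × (M.X → D)) :
    (w.foldl M.step cfg).2 = w.foldl (fun ν a x => M.evalE ν (f a x)) cfg.2 := by
  induction w generalizing cfg with
  | nil => rfl
  | cons a w ih => simp only [List.foldl_cons, ih, step, hρ]

end LinCRA

namespace WAF

variable {σ D : Type*} [Semiring D]

def toLinCRA (W : WAF σ D) : LinCRA σ D :=
  letI := W.finP
  { Q := Finset W.P
    finQ := inferInstance
    q0 := ∅
    X := W.P
    finX := W.finP
    initv := W.ini
    δ := fun q _ => q
    ρ := fun _ a p => (fun p' => W.wt p' a p, 0)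
    μ := fun _ => (W.fin, 0) }

theorem toLinCRA_run_snd (W : WAF σ D) (w : List σ) : (W.toLinCRA.run w).2 = W.fwd w := by
  rw [LinCRA.run, LinCRA.foldl_step_snd_of_ρ_eq _ _ (fun _ _ => rfl)]
  simp only [LinCRA.evalE, add_zero]
  rfl

theorem toLinCRA_val (W : WAF σ D) (w : List σ) : W.toLinCRA.val w = W.val w := by
  rw [LinCRA.val, LinCRA.evalE, toLinCRA_run_snd]
  exact add_zero _

end WAF

/-- If `(D, ⊕, ⊗)` is a semiring, every weighted automaton with state set `P` is
equivalent to a deterministic CRA over `(D, ⊕, ⊗c)` whose states are the subsets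
of `P` and whose registers are indexed by `P`; the subset construction yields, for
each automaton state `p`, a register `x_p` whose value after reading `w` equals
the `⊕`-sum over all paths from initial states to `p` of the `⊗`-products of
weights along the path. -/
theorem WAF.to_LinCRA {σ D : Type*} [Semiring D] (W : WAF σ D) :
    ∃ (M : LinCRA σ D) (_ : M.Q ≃ Finset W.P) (eX : M.X ≃ W.P),
      (∀ w, M.val w = W.val w) ∧
      (∀ (w : List σ) (p : W.P), (M.run w).2 (eX.symm p) = W.fwd w p) :=
  ⟨W.toLinCRA, Equiv.refl _, Equiv.refl _, W.toLinCRA_val,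
    fun w p => congrFun (W.toLinCRA_run_snd w) p⟩
end
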